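/- arXiv:1705.02188 — 3 statements merged into one kernel-verified Lean document; each statement's English description precedes it below -/
import Mathlib

section
/- For every real t with 0 < t ≤ 1 and every p ∈ (0,1], the following chain of inequalities holds: t^p − t^(p−1) ≤ (1/2)·(t^p − t^(p−1) + t − 1) ≤ (t^p − 1)/p ≤ ((t+1)/2)^(p−1)·(t−1) ≤ t^(p+1) − t^p ≤ 0. -/
/-!
The function `x ↦ x ^ p / p` is an antiderivative of `x ↦ x ^ (p - 1)`, which is convex on
`(0, ∞)` because `p - 1 ≤ 0`. The two middle inequalities are therefore the Hermite–Hadamard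
bounds on `[t, 1]`: the midpoint rule underestimates and the trapezoid rule overestimates the
increment of the antiderivative. The outer inequalities follow from `t ^ p ≤ 1 ≤ t ^ (p - 1)`,
`1 ≤ ((t + 1) / 2) ^ (p - 1)` and `t - 1 ≤ 0`.
-/

open Real Set

lemma apply_le_apply_of_hasDerivAt_nonneg {G g : ℝ → ℝ} {a b : ℝ} (hab : a ≤ b)
    (hG : ∀ x ∈ Icc a b, HasDerivAt G (g x) x) (hg : ∀ x ∈ Ioo a b, 0 ≤ g x) : G a ≤ G b := by
  refine monotoneOn_of_hasDerivWithinAt_nonneg (f' := g) (convex_Icc a b)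
    (fun x hx ↦ (hG x hx).continuousAt.continuousWithinAt) (fun x hx ↦ ?_) (fun x hx ↦ ?_)
    (left_mem_Icc.2 hab) (right_mem_Icc.2 hab) hab
  all_goals rw [interior_Icc] at hx
  · exact (hG x (Ioo_subset_Icc_self hx)).hasDerivWithinAt
  · exact hg x hx

theorem convexOn_rpow_of_nonpos {q : ℝ} (hq : q ≤ 0) : ConvexOn ℝ (Ioi 0) fun x : ℝ ↦ x ^ q := by
  refine MonotoneOn.convexOn_of_deriv (convex_Ioi 0)
    (fun x hx ↦ (continuousAt_id.rpow_const (Or.inl (ne_of_gt hx))).continuousWithinAt) ?_ ?_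
  all_goals rw [interior_Ioi]
  · exact fun x hx ↦
      (hasDerivAt_rpow_const (Or.inl (ne_of_gt hx))).differentiableAt.differentiableWithinAt
  · intro x hx y _ hxy
    simp only [Real.deriv_rpow_const]
    exact mul_le_mul_of_nonpos_left (rpow_le_rpow_of_nonpos hx hxy (by linarith)) hq

namespace ConvexOn

variable {f F : ℝ → ℝ} {a b : ℝ}

theorem mul_apply_midpoint_le_sub (hf : ConvexOn ℝ (Icc a b) f) (hab : a ≤ b)
    (hF : ∀ x ∈ Icc a b, HasDerivAt F (f x) x) :
    (b - a) * f ((a + b) / 2) ≤ F b - F a := by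
  obtain ⟨m, hm⟩ : ∃ m, (a + b) / 2 = m := ⟨_, rfl⟩
  obtain ⟨r, hr⟩ : ∃ r, (b - a) / 2 = r := ⟨_, rfl⟩
  have hmem : ∀ x ∈ Icc 0 r, m + x ∈ Icc a b ∧ m - x ∈ Icc a b := fun x ⟨hx0, hxr⟩ ↦
    ⟨⟨by linarith, by linarith⟩, ⟨by linarith, by linarith⟩⟩
  have key := apply_le_apply_of_hasDerivAt_nonneg
    (G := fun x ↦ F (m + x) - F (m - x) - 2 * x * f m)
    (g := fun x ↦ f (m + x) + f (m - x) - 2 * f m) (a := 0) (b := r) (by linarith)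
    (fun x hx ↦ by
      have h1 := (hF _ (hmem x hx).1).comp_const_add m x
      have h2 := (hF _ (hmem x hx).2).comp_const_sub m x
      exact ((h1.sub h2).sub (((hasDerivAt_id x).const_mul 2).mul_const (f m))).congr_deriv
        (by ring))
    (fun x hx ↦ by
      obtain ⟨hplus, hminus⟩ := hmem x (Ioo_subset_Icc_self hx)
      have hmid := hf.2 hplus hminus (by norm_num : (0 : ℝ) ≤ 1 / 2)
        (by norm_num : (0 : ℝ) ≤ 1 / 2) (by norm_num)
      simp only [smul_eq_mul] at hmid
      rw [show 1 / 2 * (m + x) + 1 / 2 * (m - x) = m by ring] at hmid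
      linarith)
  rw [show m + r = b by linarith, show m - r = a by linarith] at key
  simp only [add_zero, sub_zero, mul_zero, zero_mul, sub_self] at key
  rw [← hr] at key
  rw [hm]
  linarith

theorem sub_le_mul_average (hf : ConvexOn ℝ (Icc a b) f) (hab : a ≤ b)
    (hF : ∀ x ∈ Icc a b, HasDerivAt F (f x) x) :
    F b - F a ≤ (b - a) * ((f a + f b) / 2) := by
  rcases hab.eq_or_lt with rfl | hab
  · simp
  -- The polynomial part of `G` is an antiderivative of `(b - a)` times the chord from `a` to `b`.
  have key := apply_le_apply_of_hasDerivAt_nonneg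
    (G := fun x ↦ (x - a) * (2 * b - a - x) / 2 * f a + (x - a) ^ 2 / 2 * f b - (b - a) * F x)
    (g := fun x ↦ (b - x) * f a + (x - a) * f b - (b - a) * f x) hab.le
    (fun x hx ↦ by
      have hchord : HasDerivAt
          (fun x : ℝ ↦ (x - a) * (2 * b - a - x) / 2 * f a + (x - a) ^ 2 / 2 * f b)
          ((b - x) * f a + (x - a) * f b) x := by
        refine (((((hasDerivAt_id x).sub_const a).mul
          ((hasDerivAt_id x).const_sub (2 * b - a))).div_const 2).mul_const (f a)).add
          (((((hasDerivAt_id x).sub_const a).pow 2).div_const 2).mul_const (f b)) |>.congr_deriv ?_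
        simp only [id_eq]
        ring
      exact hchord.sub ((hF x hx).const_mul (b - a)))
    (fun x ⟨hax, hxb⟩ ↦ by
      have := hf.secant_mono_aux1 (left_mem_Icc.2 hab.le) (right_mem_Icc.2 hab.le) hax hxb
      linarith)
  have : (b - a) * (F b - F a) ≤ (b - a) * ((b - a) * ((f a + f b) / 2)) := by
    simp only [sub_self, zero_mul, zero_div, zero_add] at key
    nlinarith
  exact le_of_mul_le_mul_left this (sub_pos.2 hab)

end ConvexOn

theorem stmt4 (t p : ℝ) (ht0 : 0 < t) (ht1 : t ≤ 1) (hp0 : 0 < p) (hp1 : p ≤ 1) :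
    t ^ p - t ^ (p - 1) ≤ (1 / 2) * (t ^ p - t ^ (p - 1) + t - 1) ∧
    (1 / 2) * (t ^ p - t ^ (p - 1) + t - 1) ≤ (t ^ p - 1) / p ∧
    (t ^ p - 1) / p ≤ ((t + 1) / 2) ^ (p - 1) * (t - 1) ∧
    ((t + 1) / 2) ^ (p - 1) * (t - 1) ≤ t ^ (p + 1) - t ^ p ∧
    t ^ (p + 1) - t ^ p ≤ 0 := by
  have hconv : ConvexOn ℝ (Icc t 1) fun x : ℝ ↦ x ^ (p - 1) :=
    (convexOn_rpow_of_nonpos (by linarith)).subset (fun x hx ↦ ht0.trans_le hx.1) (convex_Icc t 1)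
  have hF (x) (hx : x ∈ Icc t 1) : HasDerivAt (fun x : ℝ ↦ x ^ p / p) (x ^ (p - 1)) x :=
    ((hasDerivAt_rpow_const (Or.inl (ht0.trans_le hx.1).ne')).div_const p).congr_deriv
      (by field_simp)
  have hmid := hconv.mul_apply_midpoint_le_sub ht1 hF
  have htrap := hconv.sub_le_mul_average ht1 hF
  simp only [one_rpow] at hmid htrap
  have hp : t ^ p = t ^ (p - 1) * t := by rw [← rpow_add_one ht0.ne', sub_add_cancel]
  have hp1 : t ^ (p + 1) = t ^ p * t := rpow_add_one ht0.ne' p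
  have h1 : 1 ≤ t ^ (p - 1) := one_le_rpow_of_pos_of_le_one_of_nonpos ht0 ht1 (by linarith)
  have h2 : t ^ p ≤ 1 := rpow_le_one ht0.le ht1 hp0.le
  have h3 : 1 ≤ ((t + 1) / 2) ^ (p - 1) :=
    one_le_rpow_of_pos_of_le_one_of_nonpos (by linarith) (by linarith) (by linarith)
  have h4 : 0 < t ^ p := rpow_pos_of_pos ht0 p
  rw [show (t ^ p - 1) / p = -(1 / p - t ^ p / p) by ring, hp1]
  refine ⟨?_, ?_, by linarith, ?_, ?_⟩
  · nlinarith [mul_nonneg (sub_nonneg.2 h1) (sub_nonneg.2 ht1)]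
  · rw [hp] at htrap ⊢
    linarith
  · nlinarith [mul_nonneg (sub_nonneg.2 (h2.trans h3)) (sub_nonneg.2 ht1)]
  · nlinarith [mul_nonneg h4.le (sub_nonneg.2 ht1)]
end

section
/- Let A and B be n×n complex positive definite matrices with B ≤ A in the Loewner order, and let p ∈ (0,1]. Then the chain A #_p B − A ♮_{p−1} B ≤ (1/2)·(A #_p B − A ♮_{p−1} B + B − A) ≤ T_p(A|B) ≤ K_p(A,B) ≤ A ♮_{p+1} B − A #_p B ≤ 0 holds in the Loewner order. -/
open Matrix ComplexOrder

/-- Real power of a (Hermitian) complex matrix via the continuous functional calculus,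
corresponding to `Matrix.PosDef.rpow` on positive definite matrices. -/
noncomputable def mrpow {n : Type*} [Fintype n] [DecidableEq n]
    (A : Matrix n n ℂ) (r : ℝ) : Matrix n n ℂ :=
  cfc (fun t : ℝ => t ^ r) A

/-- The Loewner order: `loe X Y` means `Y - X` is positive semidefinite. -/
def loe {n : Type*} [Fintype n] (X Y : Matrix n n ℂ) : Prop :=
  (Y - X).PosSemidef

/-- `A ♮ᵣ B = A^{1/2} (A^{-1/2} B A^{-1/2})^r A^{1/2}`; for `r ∈ [0,1]` this is the
weighted geometric mean `A #ᵣ B`. -/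
noncomputable def natu {n : Type*} [Fintype n] [DecidableEq n]
    (A B : Matrix n n ℂ) (r : ℝ) : Matrix n n ℂ :=
  mrpow A (1 / 2) * mrpow (mrpow A (-(1 / 2)) * B * mrpow A (-(1 / 2))) r * mrpow A (1 / 2)

/-- The Tsallis relative operator entropy `T_p(A|B) = (A #_p B - A) / p`. -/
noncomputable def TsallisEntropy {n : Type*} [Fintype n] [DecidableEq n]
    (A B : Matrix n n ℂ) (p : ℝ) : Matrix n n ℂ :=
  (1 / p : ℝ) • (natu A B p - A)

/-- `K_p(A,B) = A^{1/2} ((A^{-1/2} B A^{-1/2} + I)/2)^{p-1} (A^{-1/2} B A^{-1/2} - I) A^{1/2}`. -/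
noncomputable def Kp {n : Type*} [Fintype n] [DecidableEq n]
    (A B : Matrix n n ℂ) (p : ℝ) : Matrix n n ℂ :=
  mrpow A (1 / 2) *
    mrpow ((1 / 2 : ℝ) • (mrpow A (-(1 / 2)) * B * mrpow A (-(1 / 2)) + 1)) (p - 1) *
    (mrpow A (-(1 / 2)) * B * mrpow A (-(1 / 2)) - 1) * mrpow A (1 / 2)

/-
Write `C = A^{-1/2} B A^{-1/2}`. Every term of the chain is an operator perspective
`A^{1/2} f(C) A^{1/2}` of an explicit real function `f`: `t ↦ t^r` for `A ♮_r B`,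
`t ↦ (t^p - 1)/p` for `T_p(A|B)`, `t ↦ ((t+1)/2)^{p-1} (t-1)` for `K_p(A,B)`, and `1`, `t` for
`A`, `B`. Both the functional calculus and the congruence by `A^{1/2}` are monotone, and
`B ≤ A` puts the spectrum of `C` in `(0,1]`, so the chain reduces to five inequalities between
real functions on `(0,1]`. The two nontrivial ones are the trapezoid and midpoint
(Hermite–Hadamard) bounds for `1 - t^p = ∫_t^1 p x^{p-1} dx`, the integrand being convex; they
are proved by showing that the differences are antitone, their derivatives reducing to Bernoulli's
inequality.
-/

lemma antitoneOn_Ioi_of_hasDerivAt_nonpos {f f' : ℝ → ℝ} {a : ℝ}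
    (hf : ∀ x ∈ Set.Ioi a, HasDerivAt f (f' x) x) (hf' : ∀ x ∈ Set.Ioi a, f' x ≤ 0) :
    AntitoneOn f (Set.Ioi a) :=
  antitoneOn_of_hasDerivWithinAt_nonpos (convex_Ioi a)
    (fun x hx => (hf x hx).continuousAt.continuousWithinAt)
    (fun x hx => (hf x (interior_subset hx)).hasDerivWithinAt)
    (fun x hx => hf' x (interior_subset hx))

namespace Real

open Set

lemma two_sub_mul_rpow_add_le_one {x p : ℝ} (hx : 0 < x) (hp : p ≤ 1) :
    (2 - p) * x ^ (p - 1) + (p - 1) * x ^ (p - 2) ≤ 1 := by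
  have hbern : 1 + (2 - p) * (x - 1) ≤ x ^ (2 - p) := by
    simpa using one_add_mul_self_le_rpow_one_add (s := x - 1) (by linarith) (p := 2 - p)
      (by linarith)
  have h1 : x ^ (p - 1) = x ^ (p - 2) * x := by rw [← rpow_add_one hx.ne']; ring_nf
  have h2 : x ^ (p - 2) * x ^ (2 - p) = 1 := by rw [← rpow_add hx]; simp
  rw [h1]
  nlinarith [mul_le_mul_of_nonneg_left hbern (rpow_nonneg hx.le (p - 2))]

lemma two_sub_mul_rpow_add_le_rpow {a b p : ℝ} (ha : 0 < a) (hb : 0 < b) (hp : p ≤ 1) :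
    (2 - p) * a ^ (p - 1) + (p - 1) * b * a ^ (p - 2) ≤ b ^ (p - 1) := by
  have h := mul_le_mul_of_nonneg_right (two_sub_mul_rpow_add_le_one (div_pos ha hb) hp)
    (rpow_nonneg hb.le (p - 1))
  rw [div_rpow ha.le hb.le, div_rpow ha.le hb.le] at h
  have h1 : b ^ (p - 1) = b ^ (p - 2) * b := by rw [← rpow_add_one hb.ne']; ring_nf
  have h2 : 0 < b ^ (p - 2) := rpow_pos_of_pos hb _
  have h3 : 0 < b ^ (p - 1) := rpow_pos_of_pos hb _
  rw [h1] at h ⊢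
  field_simp at h
  linarith

lemma trapezoid_le_rpow_sub_one {t p : ℝ} (ht0 : 0 < t) (ht1 : t ≤ 1) (hp0 : 0 ≤ p)
    (hp1 : p ≤ 1) : p / 2 * ((t ^ (p - 1) + 1) * (t - 1)) ≤ t ^ p - 1 := by
  set F : ℝ → ℝ := fun x => x ^ p - 1 - p / 2 * ((x ^ (p - 1) + 1) * (x - 1)) with hF
  have hderiv (x : ℝ) (hx : 0 < x) : HasDerivAt F
      (p * x ^ (p - 1) - p / 2 * ((p - 1) * x ^ (p - 1 - 1) * (x - 1) + (x ^ (p - 1) + 1))) x :=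
    ((hasDerivAt_rpow_const (p := p) (Or.inl hx.ne')).sub_const 1).sub
      ((((hasDerivAt_rpow_const (p := p - 1) (Or.inl hx.ne')).add_const 1).mul
        ((hasDerivAt_id' x).sub_const 1)).const_mul (p / 2)) |>.congr_deriv (by ring)
  have hanti : AntitoneOn F (Ioi 0) := by
    refine antitoneOn_Ioi_of_hasDerivAt_nonpos hderiv fun x (hx : 0 < x) => ?_
    have h1 : x ^ (p - 1) = x ^ (p - 1 - 1) * x := by rw [← rpow_add_one hx.ne']; ring_nf
    have h2 := two_sub_mul_rpow_add_le_one hx hp1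
    rw [show p - 2 = p - 1 - 1 by ring, h1] at h2
    rw [h1]
    nlinarith [mul_le_mul_of_nonneg_left h2 hp0]
  have h := hanti ht0 (mem_Ioi.2 one_pos) ht1
  simp only [hF, one_rpow] at h
  linarith

lemma rpow_sub_one_le_midpoint {t p : ℝ} (ht0 : 0 < t) (ht1 : t ≤ 1) (hp0 : 0 ≤ p)
    (hp1 : p ≤ 1) : t ^ p - 1 ≤ p * ((1 / 2 * (t + 1)) ^ (p - 1) * (t - 1)) := by
  set G : ℝ → ℝ := fun x => p * ((1 / 2 * (x + 1)) ^ (p - 1) * (x - 1)) - (x ^ p - 1) with hG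
  have hderiv (x : ℝ) (hx : 0 < x) : HasDerivAt G
      (p * ((p - 1) * (1 / 2 * (x + 1)) ^ (p - 1 - 1) * (1 / 2) * (x - 1)
        + (1 / 2 * (x + 1)) ^ (p - 1)) - p * x ^ (p - 1)) x := by
    have hm : 1 / 2 * (x + 1) ≠ 0 := by positivity
    have hmid : HasDerivAt (fun y : ℝ => 1 / 2 * (y + 1)) (1 / 2) x := by
      simpa using ((hasDerivAt_id x).add_const 1).const_mul (1 / 2 : ℝ)
    refine ((((hasDerivAt_rpow_const (p := p - 1) (Or.inl hm)).comp x hmid).mul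
      ((hasDerivAt_id' x).sub_const 1)).const_mul p).sub
        ((hasDerivAt_rpow_const (p := p) (Or.inl hx.ne')).sub_const 1) |>.congr_deriv ?_
    simp
  have hanti : AntitoneOn G (Ioi 0) := by
    refine antitoneOn_Ioi_of_hasDerivAt_nonpos hderiv fun x (hx : 0 < x) => ?_
    have hm : 0 < 1 / 2 * (x + 1) := by positivity
    have h1 : (1 / 2 * (x + 1)) ^ (p - 1) =
        (1 / 2 * (x + 1)) ^ (p - 1 - 1) * (1 / 2 * (x + 1)) := by
      rw [← rpow_add_one hm.ne']; ring_nf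
    have h2 := two_sub_mul_rpow_add_le_rpow hm hx hp1
    rw [show p - 2 = p - 1 - 1 by ring, h1] at h2
    rw [h1]
    nlinarith [mul_le_mul_of_nonneg_left h2 hp0]
  have h := hanti ht0 (mem_Ioi.2 one_pos) ht1
  norm_num [hG] at h
  linarith

lemma tsallis_chain {t p : ℝ} (ht0 : 0 < t) (ht1 : t ≤ 1) (hp0 : 0 < p) (hp1 : p ≤ 1) :
    t ^ p - t ^ (p - 1) ≤ 1 / 2 * (t ^ p - t ^ (p - 1) + t - 1) ∧
    1 / 2 * (t ^ p - t ^ (p - 1) + t - 1) ≤ 1 / p * (t ^ p - 1) ∧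
    1 / p * (t ^ p - 1) ≤ (1 / 2 * (t + 1)) ^ (p - 1) * (t - 1) ∧
    (1 / 2 * (t + 1)) ^ (p - 1) * (t - 1) ≤ t ^ (p + 1) - t ^ p ∧
    t ^ (p + 1) - t ^ p ≤ 0 := by
  have htp : t ^ p = t ^ (p - 1) * t := by rw [← rpow_add_one ht0.ne']; ring_nf
  have htp1 : t ^ (p + 1) = t ^ p * t := rpow_add_one ht0.ne' p
  have h1 : 1 ≤ t ^ (p - 1) := one_le_rpow_of_pos_of_le_one_of_nonpos ht0 ht1 (by linarith)
  have hm1 : 1 ≤ (1 / 2 * (t + 1)) ^ (p - 1) :=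
    one_le_rpow_of_pos_of_le_one_of_nonpos (by positivity) (by linarith) (by linarith)
  have htp_le : t ^ p ≤ 1 := rpow_le_one ht0.le ht1 hp0.le
  have htrap := trapezoid_le_rpow_sub_one ht0 ht1 hp0.le hp1
  have hmid := rpow_sub_one_le_midpoint ht0 ht1 hp0.le hp1
  refine ⟨by nlinarith, ?_, ?_, by nlinarith, by nlinarith [rpow_nonneg ht0.le p]⟩
  · rw [one_div_mul_eq_div p, le_div_iff₀ hp0]; nlinarith
  · rw [one_div_mul_eq_div p, div_le_iff₀ hp0]; nlinarith

end Real

open scoped MatrixOrder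

section Perspective

variable {n : Type*} [Fintype n] [DecidableEq n]

lemma Matrix.continuousOn_spectrum_real (f : ℝ → ℝ) (M : Matrix n n ℂ) :
    ContinuousOn f (spectrum ℝ M) :=
  M.finite_real_spectrum.continuousOn f

lemma isSelfAdjoint_mrpow (A : Matrix n n ℂ) (r : ℝ) : IsSelfAdjoint (mrpow A r) :=
  cfc_predicate _ A

lemma mrpow_mul_mrpow {A : Matrix n n ℂ} (hA : A.PosDef) (r s : ℝ) :
    mrpow A r * mrpow A s = mrpow A (r + s) := by
  rw [mrpow, mrpow, mrpow, ← cfc_mul _ _ _ (A.continuousOn_spectrum_real _)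
    (A.continuousOn_spectrum_real _)]
  exact cfc_congr fun t ht => (Real.rpow_add (hA.isStrictlyPositive.spectrum_pos ht) r s).symm

lemma mrpow_one {A : Matrix n n ℂ} (hA : A.IsHermitian) : mrpow A 1 = A :=
  (cfc_congr fun t _ => Real.rpow_one t).trans (cfc_id' ℝ A hA)

lemma mrpow_zero {A : Matrix n n ℂ} (hA : A.IsHermitian) : mrpow A 0 = 1 :=
  (cfc_congr fun t _ => Real.rpow_zero t).trans (cfc_const_one ℝ A hA)

lemma mrpow_mul_mrpow_neg {A : Matrix n n ℂ} (hA : A.PosDef) (r : ℝ) :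
    mrpow A r * mrpow A (-r) = 1 := by
  rw [mrpow_mul_mrpow hA, add_neg_cancel, mrpow_zero hA.isHermitian]

noncomputable def invSqrtConj (A B : Matrix n n ℂ) : Matrix n n ℂ :=
  mrpow A (-(1 / 2)) * B * mrpow A (-(1 / 2))

noncomputable def perspective (f : ℝ → ℝ) (A B : Matrix n n ℂ) : Matrix n n ℂ :=
  mrpow A (1 / 2) * cfc f (invSqrtConj A B) * mrpow A (1 / 2)

variable {A B : Matrix n n ℂ}

lemma isSelfAdjoint_invSqrtConj (hB : B.IsHermitian) : IsSelfAdjoint (invSqrtConj A B) := by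
  have h := IsSelfAdjoint.conjugate (hB : IsSelfAdjoint B) (mrpow A (-(1 / 2)))
  rwa [(isSelfAdjoint_mrpow A _).star_eq] at h

lemma perspective_rpow (r : ℝ) : perspective (· ^ r) A B = natu A B r := rfl

lemma perspective_sub (f g : ℝ → ℝ) :
    perspective (fun t => f t - g t) A B = perspective f A B - perspective g A B := by
  rw [perspective, cfc_sub f g _ (Matrix.continuousOn_spectrum_real _ _)
    (Matrix.continuousOn_spectrum_real _ _), mul_sub, sub_mul, perspective, perspective]

lemma perspective_add (f g : ℝ → ℝ) :
    perspective (fun t => f t + g t) A B = perspective f A B + perspective g A B := by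
  rw [perspective, cfc_add _ f g (Matrix.continuousOn_spectrum_real _ _)
    (Matrix.continuousOn_spectrum_real _ _), mul_add, add_mul, perspective, perspective]

lemma perspective_const_mul (c : ℝ) (f : ℝ → ℝ) :
    perspective (fun t => c * f t) A B = c • perspective f A B := by
  rw [perspective, cfc_const_mul c f _ (Matrix.continuousOn_spectrum_real _ _), mul_smul_comm,
    smul_mul_assoc, perspective]

lemma perspective_zero : perspective (fun _ => 0) A B = 0 := by
  simp [perspective]

lemma perspective_one (hA : A.PosDef) (hB : B.IsHermitian) : perspective (fun _ => 1) A B = A := by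
  rw [perspective, cfc_const_one ℝ _ (isSelfAdjoint_invSqrtConj hB), mul_one, mrpow_mul_mrpow hA]
  norm_num [mrpow_one hA.isHermitian]

lemma perspective_id (hA : A.PosDef) (hB : B.IsHermitian) : perspective (fun t => t) A B = B := by
  have h := mrpow_mul_mrpow_neg hA (1 / 2)
  have h' := mrpow_mul_mrpow_neg hA (-(1 / 2))
  rw [neg_neg] at h'
  rw [perspective, cfc_id' ℝ _ (isSelfAdjoint_invSqrtConj hB), invSqrtConj]
  simp only [← mul_assoc, h, one_mul]
  rw [mul_assoc, h', mul_one]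

lemma perspective_mono {f g : ℝ → ℝ}
    (h : ∀ t ∈ spectrum ℝ (invSqrtConj A B), f t ≤ g t) :
    loe (perspective f A B) (perspective g A B) :=
  (isSelfAdjoint_mrpow A _).conjugate_le_conjugate
    (cfc_mono h (Matrix.continuousOn_spectrum_real _ _) (Matrix.continuousOn_spectrum_real _ _))

lemma Kp_eq_perspective (hB : B.IsHermitian) (p : ℝ) :
    Kp A B p = perspective (fun t => (1 / 2 * (t + 1)) ^ (p - 1) * (t - 1)) A B := by
  have hC := isSelfAdjoint_invSqrtConj (A := A) hB
  have hc := fun f => Matrix.continuousOn_spectrum_real f (invSqrtConj A B)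
  have hmid : (1 / 2 : ℝ) • (invSqrtConj A B + 1) =
      cfc (fun t : ℝ => 1 / 2 * (t + 1)) (invSqrtConj A B) := by
    rw [cfc_const_mul _ _ _ (hc _), cfc_add _ _ _ (hc _) (hc _), cfc_id' ℝ _ hC,
      cfc_const_one ℝ _ hC]
  have hsub : invSqrtConj A B - 1 = cfc (fun t : ℝ => t - 1) (invSqrtConj A B) := by
    rw [cfc_sub _ _ _ (hc _) (hc _), cfc_id' ℝ _ hC, cfc_const_one ℝ _ hC]
  have hpow : mrpow ((1 / 2 : ℝ) • (invSqrtConj A B + 1)) (p - 1) =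
      cfc (fun t : ℝ => (1 / 2 * (t + 1)) ^ (p - 1)) (invSqrtConj A B) := by
    rw [hmid, mrpow, cfc_comp' (fun t : ℝ => t ^ (p - 1)) (fun t : ℝ => 1 / 2 * (t + 1)) _
      (((invSqrtConj A B).finite_real_spectrum.image _).continuousOn _) (hc _) hC]
  rw [perspective, cfc_mul (fun t : ℝ => (1 / 2 * (t + 1)) ^ (p - 1)) (fun t => t - 1) _
    (hc _) (hc _), ← hpow, ← hsub, ← mul_assoc]
  rfl

lemma invSqrtConj_le_one (hA : A.PosDef) (hBA : loe B A) : invSqrtConj A B ≤ 1 :=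
  calc invSqrtConj A B ≤ mrpow A (-(1 / 2)) * A * mrpow A (-(1 / 2)) :=
        (isSelfAdjoint_mrpow A _).conjugate_le_conjugate hBA
    _ = mrpow A (-(1 / 2)) * mrpow A 1 * mrpow A (-(1 / 2)) := by rw [mrpow_one hA.isHermitian]
    _ = 1 := by rw [mrpow_mul_mrpow hA, mrpow_mul_mrpow hA]; norm_num [mrpow_zero hA.isHermitian]

lemma spectrum_invSqrtConj_subset_Ioc (hA : A.PosDef) (hB : B.PosDef) (hBA : loe B A) :
    spectrum ℝ (invSqrtConj A B) ⊆ Set.Ioc 0 1 := by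
  have hunit : IsUnit (mrpow A (-(1 / 2))) :=
    .of_mul_eq_one _ (by simpa using mrpow_mul_mrpow_neg hA (-(1 / 2)))
  have hpos : IsStrictlyPositive (invSqrtConj A B) :=
    IsStrictlyPositive.conjugate_of_isUnit_of_isSelfAdjoint _ _ hunit (isSelfAdjoint_mrpow A _)
      hB.isStrictlyPositive
  have hle := (CFC.le_one_iff (R := ℝ) _ (isSelfAdjoint_invSqrtConj hB.isHermitian)).mp
    (invSqrtConj_le_one hA hBA)
  exact fun t ht => ⟨hpos.spectrum_pos ht, hle t ht⟩

end Perspective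

theorem stmt9 {n : Type*} [Fintype n] [DecidableEq n] {A B : Matrix n n ℂ}
    (hA : A.PosDef) (hB : B.PosDef) (hBA : loe B A)
    {p : ℝ} (hp0 : 0 < p) (hp1 : p ≤ 1) :
    loe (natu A B p - natu A B (p - 1))
      ((1 / 2 : ℝ) • (natu A B p - natu A B (p - 1) + B - A)) ∧
    loe ((1 / 2 : ℝ) • (natu A B p - natu A B (p - 1) + B - A)) (TsallisEntropy A B p) ∧
    loe (TsallisEntropy A B p) (Kp A B p) ∧
    loe (Kp A B p) (natu A B (p + 1) - natu A B p) ∧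
    loe (natu A B (p + 1) - natu A B p) 0 := by
  have hspec := spectrum_invSqrtConj_subset_Ioc hA hB hBA
  have hchain (t : ℝ) (ht : t ∈ spectrum ℝ (invSqrtConj A B)) :=
    Real.tsallis_chain (hspec ht).1 (hspec ht).2 hp0 hp1
  have h1 := perspective_mono fun t ht => (hchain t ht).1
  have h2 := perspective_mono fun t ht => (hchain t ht).2.1
  have h3 := perspective_mono fun t ht => (hchain t ht).2.2.1
  have h4 := perspective_mono fun t ht => (hchain t ht).2.2.2.1
  have h5 := perspective_mono fun t ht => (hchain t ht).2.2.2.2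
  simp only [perspective_sub, perspective_add, perspective_const_mul, perspective_rpow,
    perspective_one hA hB.isHermitian, perspective_id hA hB.isHermitian, perspective_zero]
    at h1 h2 h3 h4 h5
  rw [Kp_eq_perspective hB.isHermitian]
  exact ⟨h1, h2, h3, h4, h5⟩
end

section
/- Let A and B be n×n complex positive definite matrices, and let Φ be a positive linear map from n×n complex matrices to m×m complex matrices such that Φ(A) and Φ(B) are positive definite. Then for every p ∈ [0,1], with r := min{p, 1−p} and R := max{p, 1−p}, one has 2r·(Φ(A ∇ B) − Φ(A) # Φ(B)) + Φ(A) #_p Φ(B) ≤ Φ(A ∇_p B) ≤ 2R·(Φ(A ∇ B) − Φ(A # B)) + Φ(A #_p B) in the Loewner order. -/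
/-!
For `p ≤ 1/2` both scalar Kittaneh–Manasrah inequalities are instances of the weighted AM–GM
inequality: the refinement for `a` and `√(ab)` with weights `1 - 2p, 2p`, the reverse for
`a^(1-p) b^p` and `b`, whose geometric mean with weights `1/(2(1-p)), (1-2p)/(2(1-p))` is `√(ab)`;
the case `p ≥ 1/2` follows by exchanging `a, b` and `p, 1 - p`. Taking `a = 1` and `b` in the
spectrum of `X = A^(-1/2) B A^(-1/2)`, the functional calculus turns them into operator
inequalities in `X`, and the congruence `Y ↦ A^(1/2) Y A^(1/2)` carries these to inequalities
between `A ∇_p B`, `A #_p B` and `A # B`. The refinement is applied to `Φ A, Φ B` directly, the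
reverse to `A, B` followed by the monotone map `Φ`.
-/

open Matrix ComplexOrder

namespace Real

lemma sqrt_rpow_two_mul {x : ℝ} (hx : 0 ≤ x) (q : ℝ) : √x ^ (2 * q) = x ^ q := by
  rw [sqrt_eq_rpow, ← rpow_mul hx]; ring_nf

lemma young_refined_of_le_half {a b p : ℝ} (ha : 0 < a) (hb : 0 < b) (hp0 : 0 ≤ p)
    (hp : p ≤ 1 / 2) : p * (√a - √b) ^ 2 + a ^ (1 - p) * b ^ p ≤ (1 - p) * a + p * b := by
  have hgeom : a ^ (1 - p) * b ^ p = a ^ (1 - 2 * p) * (√a * √b) ^ (2 * p) := by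
    rw [mul_rpow (sqrt_nonneg a) (sqrt_nonneg b), sqrt_rpow_two_mul ha.le,
      sqrt_rpow_two_mul hb.le, ← mul_assoc, ← rpow_add ha]
    ring_nf
  have hamgm := geom_mean_le_arith_mean2_weighted (by linarith) (by linarith) ha.le
    (mul_nonneg (sqrt_nonneg a) (sqrt_nonneg b)) (sub_add_cancel 1 (2 * p))
  have hsq : (√a - √b) ^ 2 = a + b - 2 * (√a * √b) := by
    rw [sub_sq, sq_sqrt ha.le, sq_sqrt hb.le]; ring
  rw [hsq, hgeom]
  linear_combination hamgm

lemma young_reversed_of_le_half {a b p : ℝ} (ha : 0 < a) (hb : 0 < b) (hp : p ≤ 1 / 2) :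
    (1 - p) * a + p * b ≤ (1 - p) * (√a - √b) ^ 2 + a ^ (1 - p) * b ^ p := by
  have hw : 0 < 2 * (1 - p) := by linarith
  have h1p : 1 - p ≠ 0 := by linarith
  have hgeom : (a ^ (1 - p) * b ^ p) ^ (1 / (2 * (1 - p))) * b ^ (1 - 1 / (2 * (1 - p)))
      = √a * √b := by
    rw [mul_rpow (by positivity) (by positivity), ← rpow_mul ha.le, ← rpow_mul hb.le,
      mul_assoc, ← rpow_add hb, sqrt_eq_rpow, sqrt_eq_rpow]
    congr 2
    · field_simp
    · field_simp; ring
  have hamgm := geom_mean_le_arith_mean2_weighted (p₁ := a ^ (1 - p) * b ^ p) (by positivity)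
    (by rw [sub_nonneg, div_le_one hw]; linarith) (by positivity) hb.le
    (add_sub_cancel (1 / (2 * (1 - p))) 1)
  rw [hgeom] at hamgm
  have hsq : (√a - √b) ^ 2 = a + b - 2 * (√a * √b) := by
    rw [sub_sq, sq_sqrt ha.le, sq_sqrt hb.le]; ring
  have hk : 2 * (1 - p) * (1 / (2 * (1 - p))) = 1 := by field_simp
  rw [hsq]
  linear_combination (2 * (1 - p)) * hamgm + (a ^ (1 - p) * b ^ p - b) * hk

lemma young_refined {a b p : ℝ} (ha : 0 < a) (hb : 0 < b) (hp0 : 0 ≤ p) (hp1 : p ≤ 1) :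
    min p (1 - p) * (√a - √b) ^ 2 + a ^ (1 - p) * b ^ p ≤ (1 - p) * a + p * b := by
  rcases le_total p (1 / 2) with hp | hp
  · rw [min_eq_left (by linarith)]
    exact young_refined_of_le_half ha hb hp0 hp
  · have h := young_refined_of_le_half hb ha (sub_nonneg.2 hp1) (by linarith)
    rw [sub_sub_cancel] at h
    rw [min_eq_right (by linarith)]
    linarith [h, show (√b - √a) ^ 2 = (√a - √b) ^ 2 by ring, mul_comm (b ^ p) (a ^ (1 - p))]

lemma young_reversed {a b p : ℝ} (ha : 0 < a) (hb : 0 < b) :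
    (1 - p) * a + p * b ≤ max p (1 - p) * (√a - √b) ^ 2 + a ^ (1 - p) * b ^ p := by
  rcases le_total p (1 / 2) with hp | hp
  · rw [max_eq_right (by linarith)]
    exact young_reversed_of_le_half ha hb hp
  · have h := young_reversed_of_le_half hb ha (p := 1 - p) (by linarith)
    rw [sub_sub_cancel] at h
    rw [max_eq_left (by linarith)]
    linarith [h, show (√b - √a) ^ 2 = (√a - √b) ^ 2 by ring, mul_comm (b ^ p) (a ^ (1 - p))]

end Real

section Congruence

variable {A : Type*} [Ring A] [Algebra ℝ A]

lemma conj_affine (S x : A) (p : ℝ) :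
    S * ((1 - p) • 1 + p • x) * S = (1 - p) • (S * S) + p • (S * x * S) := by
  simp only [mul_add, add_mul, mul_smul_comm, smul_mul_assoc, mul_one]

lemma conj_amgmGap (S x y z : A) (c : ℝ) :
    S * (c • ((1 / 2 : ℝ) • (1 + x) - y) + z) * S
      = c • ((1 / 2 : ℝ) • (S * S + S * x * S) - S * y * S) + S * z * S := by
  simp only [mul_add, add_mul, mul_sub, sub_mul, mul_smul_comm, smul_mul_assoc, mul_one]

end Congruence

lemma IsStrictlyPositive.continuousOn_rpow_spectrum {A : Type*} [Ring A] [PartialOrder A]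
    [Algebra ℝ A] [NonnegSpectrumClass ℝ A] {x : A} (hx : IsStrictlyPositive x) (q : ℝ) :
    ContinuousOn (fun t : ℝ => t ^ q) (spectrum ℝ x) :=
  continuousOn_id.rpow_const fun _ ht => Or.inl (hx.spectrum_pos ht).ne'

section Operator

variable {A : Type*} [Ring A] [StarRing A] [TopologicalSpace A] [Algebra ℝ A]
  [ContinuousFunctionalCalculus ℝ A IsSelfAdjoint]

lemma cfc_affine (x : A) (p : ℝ) (hx : IsSelfAdjoint x := by cfc_tac) :
    cfc (fun t : ℝ => (1 - p) + p * t) x = (1 - p) • 1 + p • x := by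
  rw [cfc_const_add (1 - p) (fun t => p * t) x, cfc_const_mul_id p x,
    Algebra.algebraMap_eq_smul_one]

variable [PartialOrder A] [StarOrderedRing A] [NonnegSpectrumClass ℝ A]

noncomputable def weightedGeomMean (a b : A) (q : ℝ) : A :=
  a ^ (1 / 2 : ℝ) * (a ^ (-(1 / 2) : ℝ) * b * a ^ (-(1 / 2) : ℝ)) ^ q * a ^ (1 / 2 : ℝ)

lemma IsStrictlyPositive.conj_rpow_neg_half {a b : A} (ha : IsStrictlyPositive a)
    (hb : IsStrictlyPositive b) :
    IsStrictlyPositive (a ^ (-(1 / 2) : ℝ) * b * a ^ (-(1 / 2) : ℝ)) :=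
  IsStrictlyPositive.conjugate_of_isUnit_of_isSelfAdjoint b _ (ha.isUnit.cfcRpow _)
    (by cfc_tac) hb

lemma rpow_half_mul_conj_rpow_neg_half {a : A} (ha : IsStrictlyPositive a) (b : A) :
    a ^ (1 / 2 : ℝ) * (a ^ (-(1 / 2) : ℝ) * b * a ^ (-(1 / 2) : ℝ)) * a ^ (1 / 2 : ℝ)
      = b := by
  simp only [← mul_assoc, CFC.rpow_mul_rpow_neg _ ha, one_mul]
  rw [mul_assoc, CFC.rpow_neg_mul_rpow _ ha, mul_one]

variable [IsSemitopologicalRing A] [T2Space A]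

lemma rpow_half_mul_rpow_half {a : A} (ha : 0 ≤ a) :
    a ^ (1 / 2 : ℝ) * a ^ (1 / 2 : ℝ) = a := by
  rw [← CFC.sqrt_eq_rpow, CFC.sqrt_mul_sqrt_self a ha]

lemma IsStrictlyPositive.cfc_amgmGap {x : A} (hx : IsStrictlyPositive x) (p c : ℝ) :
    cfc (fun t : ℝ => c * ((1 / 2) * (1 + t) - t ^ (1 / 2 : ℝ)) + t ^ p) x
      = c • ((1 / 2 : ℝ) • (1 + x) - x ^ (1 / 2 : ℝ)) + x ^ p := by
  have := hx.continuousOn_rpow_spectrum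
  rw [cfc_add (a := x) (fun t => c * ((1 / 2) * (1 + t) - t ^ (1 / 2 : ℝ))) (fun t => t ^ p),
    cfc_const_mul c (fun t => (1 / 2) * (1 + t) - t ^ (1 / 2 : ℝ)) x,
    cfc_sub (fun t => (1 / 2) * (1 + t)) (fun t => t ^ (1 / 2 : ℝ)) x,
    cfc_const_mul (1 / 2) (fun t => 1 + t) x, cfc_const_add 1 (fun t => t) x, cfc_id' ℝ x,
    Algebra.algebraMap_eq_smul_one, one_smul, CFC.rpow_eq_cfc_real hx.nonneg,
    CFC.rpow_eq_cfc_real hx.nonneg]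

lemma IsStrictlyPositive.young_refined {x : A} (hx : IsStrictlyPositive x) {p : ℝ}
    (hp0 : 0 ≤ p) (hp1 : p ≤ 1) :
    (2 * min p (1 - p)) • ((1 / 2 : ℝ) • (1 + x) - x ^ (1 / 2 : ℝ)) + x ^ p
      ≤ (1 - p) • 1 + p • x := by
  have := hx.continuousOn_rpow_spectrum
  rw [← cfc_affine x p, ← hx.cfc_amgmGap]
  refine cfc_mono fun t ht => ?_
  have ht0 := hx.spectrum_pos ht
  have h := Real.young_refined one_pos ht0 hp0 hp1
  rw [Real.sqrt_one, sub_sq, Real.sq_sqrt ht0.le, Real.sqrt_eq_rpow, Real.one_rpow] at h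
  linear_combination h

lemma IsStrictlyPositive.young_reversed {x : A} (hx : IsStrictlyPositive x) (p : ℝ) :
    (1 - p) • 1 + p • x
      ≤ (2 * max p (1 - p)) • ((1 / 2 : ℝ) • (1 + x) - x ^ (1 / 2 : ℝ)) + x ^ p := by
  have := hx.continuousOn_rpow_spectrum
  rw [← cfc_affine x p, ← hx.cfc_amgmGap]
  refine cfc_mono fun t ht => ?_
  have ht0 := hx.spectrum_pos ht
  have h := Real.young_reversed (p := p) one_pos ht0
  rw [Real.sqrt_one, sub_sq, Real.sq_sqrt ht0.le, Real.sqrt_eq_rpow, Real.one_rpow] at h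
  linear_combination h

lemma IsStrictlyPositive.young_refined_weightedGeomMean {a b : A} (ha : IsStrictlyPositive a)
    (hb : IsStrictlyPositive b) {p : ℝ} (hp0 : 0 ≤ p) (hp1 : p ≤ 1) :
    (2 * min p (1 - p)) • ((1 / 2 : ℝ) • (a + b) - weightedGeomMean a b (1 / 2))
      + weightedGeomMean a b p ≤ (1 - p) • a + p • b := by
  have h := IsSelfAdjoint.conjugate_le_conjugate
    ((ha.conj_rpow_neg_half hb).young_refined hp0 hp1) (c := a ^ (1 / 2 : ℝ)) (by cfc_tac)
  rwa [conj_amgmGap, conj_affine, rpow_half_mul_rpow_half ha.nonneg,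
    rpow_half_mul_conj_rpow_neg_half ha] at h

lemma IsStrictlyPositive.young_reversed_weightedGeomMean {a b : A} (ha : IsStrictlyPositive a)
    (hb : IsStrictlyPositive b) (p : ℝ) :
    (1 - p) • a + p • b
      ≤ (2 * max p (1 - p)) • ((1 / 2 : ℝ) • (a + b) - weightedGeomMean a b (1 / 2))
        + weightedGeomMean a b p := by
  have h := IsSelfAdjoint.conjugate_le_conjugate
    ((ha.conj_rpow_neg_half hb).young_reversed p) (c := a ^ (1 / 2 : ℝ)) (by cfc_tac)
  rwa [conj_amgmGap, conj_affine, rpow_half_mul_rpow_half ha.nonneg,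
    rpow_half_mul_conj_rpow_neg_half ha] at h

end Operator

open scoped MatrixOrder

section Matrix

variable {n : Type*} [Fintype n]

lemma loe_iff_le {X Y : Matrix n n ℂ} : loe X Y ↔ X ≤ Y := Iff.rfl

variable [DecidableEq n]

lemma Matrix.PosSemidef.mrpow_eq_rpow {A : Matrix n n ℂ} (hA : A.PosSemidef) (r : ℝ) :
    mrpow A r = A ^ r :=
  (CFC.rpow_eq_cfc_real hA.nonneg).symm

lemma Matrix.PosDef.natu_eq_weightedGeomMean {A B : Matrix n n ℂ} (hA : A.PosDef) (hB : B.PosDef)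
    (q : ℝ) : natu A B q = weightedGeomMean A B q := by
  have hX := hA.isStrictlyPositive.conj_rpow_neg_half hB.isStrictlyPositive
  simp only [natu, weightedGeomMean, hA.posSemidef.mrpow_eq_rpow,
    hX.nonneg.posSemidef.mrpow_eq_rpow]

end Matrix

theorem stmt15 {n m : Type*} [Fintype n] [DecidableEq n] [Fintype m] [DecidableEq m]
    {A B : Matrix n n ℂ} (hA : A.PosDef) (hB : B.PosDef)
    (Φ : Matrix n n ℂ →ₗ[ℂ] Matrix m m ℂ)
    (hΦpos : ∀ X : Matrix n n ℂ, X.PosSemidef → (Φ X).PosSemidef)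
    (hΦA : (Φ A).PosDef) (hΦB : (Φ B).PosDef)
    {p : ℝ} (hp0 : 0 ≤ p) (hp1 : p ≤ 1) :
    loe ((2 * min p (1 - p)) • (Φ ((1 / 2 : ℝ) • (A + B)) - natu (Φ A) (Φ B) (1 / 2))
          + natu (Φ A) (Φ B) p)
      (Φ ((1 - p) • A + p • B)) ∧
    loe (Φ ((1 - p) • A + p • B))
      ((2 * max p (1 - p)) • (Φ ((1 / 2 : ℝ) • (A + B)) - Φ (natu A B (1 / 2)))
          + Φ (natu A B p)) := by
  have hΦ : Monotone Φ :=
    (monotone_iff_map_nonneg Φ).2 fun X hX => (hΦpos X hX.posSemidef).nonneg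
  simp only [loe_iff_le, hA.natu_eq_weightedGeomMean hB, hΦA.natu_eq_weightedGeomMean hΦB,
    map_add, LinearMap.map_smul_of_tower]
  refine ⟨hΦA.isStrictlyPositive.young_refined_weightedGeomMean hΦB.isStrictlyPositive hp0 hp1,
    ?_⟩
  simpa only [map_add, map_sub, LinearMap.map_smul_of_tower] using
    hΦ (hA.isStrictlyPositive.young_reversed_weightedGeomMean hB.isStrictlyPositive p)
end
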